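/- arXiv:1502.02975 — 6 statements merged into one kernel-verified Lean document; each statement's English description precedes it below -/
import Mathlib

section
/- For every integer t ≥ 2, the number 2 · C(2^t + 1, 2^(t−1)) is not divisible by 8. -/
lemma digits_two_pow_sum (s : ℕ) : (Nat.digits 2 (2 ^ s)).sum = 1 := by
  induction s with
  | zero => simp
  | succ n ih =>
    rw [Nat.digits_def' (by norm_num) (by positivity)]
    have h1 : 2 ^ (n + 1) % 2 = 0 := by simp [pow_succ]
    have h2 : 2 ^ (n + 1) / 2 = 2 ^ n := by
      rw [pow_succ, Nat.mul_div_cancel _ two_pos]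
    rw [h1, h2]
    simp only [List.sum_cons, ih]

lemma digits_two_pow_add_one_sum (s : ℕ) (hs : 1 ≤ s) :
    (Nat.digits 2 (2 ^ s + 1)).sum = 2 := by
  rw [Nat.digits_def' (by norm_num) (by positivity)]
  have h1 : (2 ^ s + 1) % 2 = 1 := by
    have : 2 ∣ 2 ^ s := dvd_pow_self 2 (by omega)
    omega
  have h2 : (2 ^ s + 1) / 2 = 2 ^ (s - 1) := by
    obtain ⟨m, rfl⟩ : ∃ m, s = m + 1 := ⟨s - 1, by omega⟩
    simp [pow_succ]
    omega
  rw [h1, h2]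
  simp only [List.sum_cons, digits_two_pow_sum]

/-- For every integer `t ≥ 2`, the number `2 * C(2^t + 1, 2^(t-1))` is not divisible by `8`. -/
theorem two_mul_choose_not_dvd_eight (t : ℕ) (ht : 2 ≤ t) :
    ¬ (8 ∣ 2 * Nat.choose (2 ^ t + 1) (2 ^ (t - 1))) := by
  obtain ⟨s, rfl⟩ : ∃ s, t = s + 1 := ⟨t - 1, by omega⟩
  have hs : 1 ≤ s := by omega
  set n := 2 ^ (s + 1) + 1 with hn
  set k := 2 ^ s with hk
  have hkn : k ≤ n := by
    have : 2 ^ s ≤ 2 ^ (s + 1) := Nat.pow_le_pow_right (by norm_num) (by omega)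
    omega
  have hnk : n - k = 2 ^ s + 1 := by
    have : 2 ^ (s + 1) = 2 * 2 ^ s := by ring
    omega
  haveI : Fact (Nat.Prime 2) := ⟨Nat.prime_two⟩
  have hval : padicValNat 2 (Nat.choose n k) = 1 := by
    have := sub_one_mul_padicValNat_choose_eq_sub_sum_digits (p := 2) hkn
    rw [hnk] at this
    rw [digits_two_pow_add_one_sum s hs, digits_two_pow_add_one_sum (s + 1) (by omega),
      digits_two_pow_sum] at this
    omega
  intro hdvd
  have hC : Nat.choose n k ≠ 0 := (Nat.choose_pos hkn).ne'
  simp only [Nat.add_sub_cancel] at hdvd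
  rw [← hk] at hdvd
  have h4 : 2 ^ 2 ∣ Nat.choose n k := by omega
  have := (padicValNat_dvd_iff_le (p := 2) (n := 2) hC).mp h4
  omega
end

section
/- Let j be odd and set d = (3j+1)/2. Among subsets S of {1,…,j} of size 2j − d = (j−1)/2 there are exactly C(j, (j−1)/2) choices; in particular, for j = 2^t + 1 with t ≥ 2 this count C(2^t+1, 2^(t−1)) is congruent to a nonzero value mod 4. -/
lemma val_one (t : ℕ) (ht : 2 ≤ t) :
    padicValNat 2 ((2 ^ t + 1).choose (2 ^ (t - 1))) = 1 := by
  have hp : Fact (Nat.Prime 2) := ⟨Nat.prime_two⟩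
  have hlt : (2 : ℕ) ^ (t - 1) < 2 ^ t := Nat.pow_lt_pow_right one_lt_two (by omega)
  have hkn : 2 ^ (t - 1) ≤ 2 ^ t + 1 := by omega
  have h2t : 2 ^ t = 2 ^ (t - 1) * 2 := by rw [← pow_succ]; congr 1; omega
  have hlog : Nat.log 2 (2 ^ t + 1) < t + 1 := by
    apply Nat.log_lt_of_lt_pow (by positivity)
    have h1 : 1 < 2 ^ t := Nat.one_lt_two_pow_iff.2 (by omega)
    calc 2 ^ t + 1 < 2 ^ t + 2 ^ t := by omega
    _ = 2 ^ (t + 1) := by ring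
  rw [padicValNat_choose hkn hlog]
  have hsub : 2 ^ t + 1 - 2 ^ (t - 1) = 2 ^ (t - 1) + 1 := by omega
  rw [hsub]
  have hset : ((Finset.Ico 1 (t + 1)).filter fun i =>
      2 ^ i ≤ 2 ^ (t - 1) % 2 ^ i + (2 ^ (t - 1) + 1) % 2 ^ i) = {t} := by
    ext i
    simp only [Finset.mem_filter, Finset.mem_Ico, Finset.mem_singleton]
    constructor
    · rintro ⟨⟨h1, h2⟩, h3⟩
      by_contra hne
      have hi : i ≤ t - 1 := by omega
      have hdvd : 2 ^ i ∣ 2 ^ (t - 1) := pow_dvd_pow 2 hi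
      have hpos : (1 : ℕ) < 2 ^ i := Nat.one_lt_two_pow_iff.2 (by omega)
      have hmod1 : 2 ^ (t - 1) % 2 ^ i = 0 := Nat.mod_eq_zero_of_dvd hdvd
      have hmod2 : (2 ^ (t - 1) + 1) % 2 ^ i = 1 := by
        rw [Nat.add_mod, hmod1, Nat.zero_add, Nat.mod_mod_of_dvd, Nat.mod_eq_of_lt hpos]
        exact dvd_refl _
      rw [hmod1, hmod2] at h3
      omega
    · intro hi
      rw [hi]
      have h1 : 2 ^ (t - 1) % 2 ^ t = 2 ^ (t - 1) := Nat.mod_eq_of_lt hlt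
      have h2 : (2 ^ (t - 1) + 1) % 2 ^ t = 2 ^ (t - 1) + 1 := by
        apply Nat.mod_eq_of_lt
        have : (2:ℕ) ≤ 2 ^ (t - 1) := by
          calc (2:ℕ) = 2 ^ 1 := rfl
          _ ≤ 2 ^ (t - 1) := Nat.pow_le_pow_right (by norm_num) (by omega)
        omega
      refine ⟨⟨by omega, by omega⟩, ?_⟩
      rw [h1, h2]; omega
  rw [hset, Finset.card_singleton]

/-- For odd `j`, the number of subsets `S ⊆ {1,…,j}` of size `(j-1)/2 = 2j - d`
(where `d = (3j+1)/2`) is exactly `C(j, (j-1)/2)`; and in particular for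
`j = 2^t + 1` with `t ≥ 2` this count `C(2^t+1, 2^(t-1))` is nonzero modulo `4`. -/
theorem count_equiparting_subsets :
    (∀ j : ℕ, Odd j →
      ((Finset.range j).powersetCard (2 * j - (3 * j + 1) / 2)).card =
        j.choose ((j - 1) / 2)) ∧
    (∀ t : ℕ, 2 ≤ t → ¬ (4 ∣ (2 ^ t + 1).choose (2 ^ (t - 1)))) := by
  constructor
  · rintro j ⟨m, rfl⟩
    rw [Finset.card_powersetCard, Finset.card_range]
    congr 1
    omega
  · intro t ht hdvd
    have hp : Fact (Nat.Prime 2) := ⟨Nat.prime_two⟩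
    have hC : (2 ^ t + 1).choose (2 ^ (t - 1)) ≠ 0 := by
      apply Nat.choose_pos ?_ |>.ne'
      have : (2 : ℕ) ^ (t - 1) < 2 ^ t := Nat.pow_lt_pow_right one_lt_two (by omega)
      omega
    have h4 : (2 : ℕ) ^ 2 ∣ (2 ^ t + 1).choose (2 ^ (t - 1)) := by norm_num at hdvd ⊢; exact hdvd
    have h2 := (Nat.Prime.pow_dvd_iff_le_factorization Nat.prime_two hC).1 h4
    rw [Nat.factorization_def _ Nat.prime_two, val_one t ht] at h2
    omega
end

section
/- In the polynomial ring F₂[u₁,…,u_k], the product of all nonzero F₂-linear combinations α₁u₁ + ⋯ + α_k u_k over α ∈ (F₂)^k \ {0} equals the sum over all permutations π of {1,…,k} of the monomials u_{π(1)}^{2^{k−1}} u_{π(2)}^{2^{k−2}} ⋯ u_{π(k)}^{2^0}. -/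
open MvPolynomial

/-!
Write `D` for the permutation sum. In characteristic 2 it is the Moore determinant
`det (u_j ^ 2 ^ (k-1-i))`. If `α ≠ 0` with `α_i = 1`, adding to row `i` the other rows `j` with
`α_j = 1` turns it into `((∑ α_j u_j) ^ 2 ^ (k-1-i))_i`, since Frobenius is additive; so every
nonzero linear form divides `D`. These forms are distinct primes, and over `F₂` distinct means
non-associated, so their product `P` divides `D`. Both are homogeneous of degree `2^k - 1`, and
`D ≠ 0` because the exponents `2^(k-1-i)` are distinct, so the identity permutation contributes a
monomial that no other permutation does. Hence `D = c P` with `c ∈ F₂ˣ = {1}`.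
-/

section Moore

variable {S : Type*} [CommRing S]

def mooreMatrix {k : ℕ} (p : ℕ) (v : Fin k → S) : Matrix (Fin k) (Fin k) S :=
  Matrix.of fun j i => v j ^ p ^ (k - 1 - (i : ℕ))

theorem sum_mul_dvd_det_mooreMatrix {k : ℕ} (p : ℕ) [ExpChar S p] (v c : Fin k → S)
    (hc : ∀ j, c j ^ p = c j) {i : Fin k} (hi : IsUnit (c i)) :
    (∑ j, c j * v j) ∣ (mooreMatrix p v).det := by
  set L := ∑ j, c j * v j
  have hc_pow : ∀ j n, c j ^ p ^ n = c j := fun j n => by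
    induction n with
    | zero => rw [pow_zero, pow_one]
    | succ n ih => rw [pow_succ, pow_mul, ih, hc]
  have hrow : ∑ j, c j • mooreMatrix p v j
      = L • fun n : Fin k => L ^ (p ^ (k - 1 - (n : ℕ)) - 1) := by
    funext n
    have hpos : 0 < p ^ (k - 1 - (n : ℕ)) := pow_pos (expChar_pos S p) _
    simp only [Finset.sum_apply, Pi.smul_apply, smul_eq_mul, mooreMatrix, Matrix.of_apply]
    rw [← pow_succ', Nat.sub_add_cancel hpos, sum_pow_char_pow]
    simp only [mul_pow, hc_pow]
  have h := Matrix.det_updateRow_sum (mooreMatrix p v) i c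
  rw [hrow, Matrix.det_updateRow_smul, smul_eq_mul] at h
  exact hi.dvd_mul_left.mp (h ▸ dvd_mul_right _ _)

theorem Matrix.det_eq_sum_prod_of_charTwo {n : Type*} [Fintype n] [DecidableEq n] [CharP S 2]
    (M : Matrix n n S) : M.det = ∑ σ : Equiv.Perm n, ∏ i, M (σ i) i := by
  rw [Matrix.det_apply]
  refine Finset.sum_congr rfl fun σ _ => ?_
  rcases Int.units_eq_one_or (Equiv.Perm.sign σ) with h | h <;> simp [h, CharTwo.neg_eq]

end Moore

namespace MvPolynomial

instance subsingleton_units_of_isReduced {σ R : Type*} [CommRing R] [IsReduced R]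
    [Subsingleton Rˣ] : Subsingleton (MvPolynomial σ R)ˣ where
  allEq u v := by
    have h1 : ∀ w : (MvPolynomial σ R)ˣ, (w : MvPolynomial σ R) = 1 := fun w => by
      obtain ⟨r, hr, hw⟩ := isUnit_iff_eq_C_of_isReduced.mp w.isUnit
      rw [hw, ← C_1, ← Units.val_one, ← hr.unit_spec, Subsingleton.elim hr.unit 1]
    exact Units.ext ((h1 u).trans (h1 v).symm)

theorem IsHomogeneous.exists_eq_C_mul_of_dvd {σ R : Type*} [CommRing R] [IsDomain R]
    {p q : MvPolynomial σ R} {n : ℕ} (hp : p.IsHomogeneous n) (hq : q.IsHomogeneous n)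
    (hq0 : q ≠ 0) (hpq : p ∣ q) : ∃ a, q = C a * p := by
  obtain ⟨c, rfl⟩ := hpq
  have hp0 : p ≠ 0 := left_ne_zero_of_mul hq0
  have hc0 : c ≠ 0 := right_ne_zero_of_mul hq0
  have hdeg : c.totalDegree = 0 := by
    have := totalDegree_mul_of_isDomain hp0 hc0
    rw [hp.totalDegree hp0, hq.totalDegree hq0] at this
    omega
  exact ⟨coeff 0 c, by rw [← totalDegree_eq_zero_iff_eq_C.mp hdeg, mul_comm]⟩

section LinearForm

variable {σ R : Type*} [Fintype σ] [CommSemiring R]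

noncomputable def linearForm (α : σ → R) : MvPolynomial σ R := ∑ i, C (α i) * X i

theorem isHomogeneous_linearForm (α : σ → R) : (linearForm α).IsHomogeneous 1 :=
  IsHomogeneous.sum _ _ _ fun i _ => isHomogeneous_C_mul_X (α i) i

theorem coeff_single_linearForm [DecidableEq σ] (α : σ → R) (i : σ) :
    coeff (Finsupp.single i 1) (linearForm α) = α i := by
  simp [linearForm, coeff_sum, coeff_C_mul, coeff_X, Finsupp.single_left_inj]

theorem linearForm_injective :
    Function.Injective (linearForm : (σ → R) → MvPolynomial σ R) := by
  classical
  intro α β h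
  funext i
  rw [← coeff_single_linearForm α i, h, coeff_single_linearForm]

theorem isHomogeneous_prod_linearForm (s : Finset (σ → R)) :
    (∏ α ∈ s, linearForm α).IsHomogeneous s.card := by
  simpa using IsHomogeneous.prod s _ _ fun α _ => isHomogeneous_linearForm α

theorem prime_linearForm {K : Type*} [Field K] {α : σ → K} (hα : α ≠ 0) :
    Prime (linearForm α) := by
  classical
  obtain ⟨i, hi⟩ := Function.ne_iff.mp hα
  have hL : linearForm α ≠ 0 := fun h =>
    hi (by rw [← coeff_single_linearForm α i, h, coeff_zero]; rfl)
  refine (irreducible_of_totalDegree_eq_one ((isHomogeneous_linearForm α).totalDegree hL)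
    fun x hx => isUnit_iff_ne_zero.mpr ?_).prime
  rintro rfl
  exact hi (by simpa [coeff_single_linearForm] using hx (Finsupp.single i 1))

theorem linearForm_dvd_det_mooreMatrix_X {p k : ℕ} [Fact p.Prime] {α : Fin k → ZMod p}
    (hα : α ≠ 0) :
    linearForm α ∣ (mooreMatrix p (X : Fin k → MvPolynomial (Fin k) (ZMod p))).det := by
  obtain ⟨i, hi⟩ := Function.ne_iff.mp hα
  exact sum_mul_dvd_det_mooreMatrix p X (fun j => C (α j))
    (fun j => by rw [← map_pow, ZMod.pow_card]) ((isUnit_iff_ne_zero.mpr hi).map C)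

end LinearForm

section PermSum

variable {n R : Type*} [Fintype n] [CommSemiring R]

theorem prod_perm_X_pow_eq_monomial (e : n → ℕ) (σ : Equiv.Perm n) :
    ∏ i, (X (σ i) : MvPolynomial n R) ^ e i
      = monomial (Finsupp.equivFunOnFinite.symm (e ∘ σ.symm)) 1 := by
  rw [monomial_eq, C_1, one_mul, Finsupp.prod_fintype _ _ fun _ => pow_zero _]
  exact Fintype.prod_equiv σ _ _ fun i => by simp

variable [DecidableEq n]

theorem isHomogeneous_sum_perm_prod_X_pow (e : n → ℕ) :
    (∑ σ : Equiv.Perm n, ∏ i, (X (σ i) : MvPolynomial n R) ^ e i).IsHomogeneous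
      (∑ i, e i) :=
  IsHomogeneous.sum _ _ _ fun _ _ => IsHomogeneous.prod _ _ _ fun _ _ => isHomogeneous_X_pow _ _

theorem sum_perm_prod_X_pow_ne_zero [Nontrivial R] {e : n → ℕ} (he : Function.Injective e) :
    ∑ σ : Equiv.Perm n, ∏ i, (X (σ i) : MvPolynomial n R) ^ e i ≠ 0 := by
  have hcoeff : coeff (Finsupp.equivFunOnFinite.symm e)
      (∑ σ : Equiv.Perm n, ∏ i, (X (σ i) : MvPolynomial n R) ^ e i) = 1 := by
    simp only [coeff_sum, prod_perm_X_pow_eq_monomial, coeff_monomial]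
    refine (Finset.sum_eq_single 1 (fun σ _ hσ => if_neg fun h => hσ ?_) (by simp)).trans
      (if_pos rfl)
    ext i
    simpa using (he (DFunLike.congr_fun h (σ i))).symm
  intro h
  simp [h] at hcoeff

end PermSum

end MvPolynomial


theorem Fin.sum_two_pow_sub_one_sub (k : ℕ) :
    ∑ i : Fin k, 2 ^ (k - 1 - (i : ℕ)) = 2 ^ k - 1 := by
  rw [← Equiv.sum_comp Fin.revPerm]
  have hrev : ∀ i : Fin k, k - 1 - (Fin.revPerm i : ℕ) = i := fun i => by
    rw [Fin.revPerm_apply, Fin.val_rev]; omega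
  simp only [hrev]
  rw [Fin.sum_univ_eq_sum_range (2 ^ ·), Nat.geomSum_eq le_rfl, Nat.div_one]

theorem Fin.injective_two_pow_sub_one_sub (k : ℕ) :
    Function.Injective fun i : Fin k => 2 ^ (k - 1 - (i : ℕ)) := fun i j h => Fin.ext <| by
  have := Nat.pow_right_injective le_rfl h
  omega

theorem dickson_product_eq_perm_sum_general (k : ℕ) :
    (∏ α ∈ Finset.univ.filter (fun α : Fin k → ZMod 2 => α ≠ 0),
        (∑ i : Fin k, (C (α i) * X i : MvPolynomial (Fin k) (ZMod 2))))
      = ∑ π : Equiv.Perm (Fin k), ∏ i : Fin k, (X (π i) : MvPolynomial (Fin k) (ZMod 2)) ^ 2 ^ (k - 1 - i.val) := by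
  classical
  set F := Finset.univ.filter (fun α : Fin k → ZMod 2 => α ≠ 0) with hF
  set D := ∑ π : Equiv.Perm (Fin k), ∏ i : Fin k,
    (X (π i) : MvPolynomial (Fin k) (ZMod 2)) ^ 2 ^ (k - 1 - i.val)
  change ∏ α ∈ F, linearForm α = D
  have hD_det : D = (mooreMatrix 2 X).det :=
    (Matrix.det_eq_sum_prod_of_charTwo (mooreMatrix 2 X)).symm
  have hPD : ∏ α ∈ F, linearForm α ∣ D := by
    rw [← Finset.prod_image (f := fun p => p) linearForm_injective.injOn]
    refine Finset.prod_primes_dvd D ?_ ?_ <;> simp only [Finset.mem_image] <;>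
      rintro _ ⟨α, hα, rfl⟩ <;> have hα0 := (Finset.mem_filter.mp hα).2
    exacts [prime_linearForm hα0, hD_det ▸ linearForm_dvd_det_mooreMatrix_X hα0]
  have hcard : F.card = 2 ^ k - 1 := by
    simp [hF, Finset.filter_ne', Finset.card_erase_of_mem]
  have hD : D.IsHomogeneous (2 ^ k - 1) := by
    simpa only [Fin.sum_two_pow_sub_one_sub] using
      isHomogeneous_sum_perm_prod_X_pow (R := ZMod 2) fun i : Fin k => 2 ^ (k - 1 - i.val)
  have hD0 : D ≠ 0 := sum_perm_prod_X_pow_ne_zero (Fin.injective_two_pow_sub_one_sub k)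
  obtain ⟨a, ha⟩ :=
    (hcard ▸ isHomogeneous_prod_linearForm F).exists_eq_C_mul_of_dvd hD hD0 hPD
  have ha1 : a = 1 :=
    (by decide : ∀ b : ZMod 2, b ≠ 0 → b = 1) a fun h => hD0 (by simp [ha, h])
  rw [ha, ha1, C_1, one_mul]

/-- The top Dickson polynomial: in `F₂[u₁,…,u_k]`, the product of all nonzero linear forms
`α₁u₁ + ⋯ + α_k u_k` over `α ∈ (F₂)^k \ {0}` equals the sum over all permutations `π` of
`{1,…,k}` of the monomials `u_{π(1)}^{2^(k-1)} u_{π(2)}^{2^(k-2)} ⋯ u_{π(k)}^{2^0}`. -/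
theorem dickson_product_eq_perm_sum (k : ℕ) (hk : 1 ≤ k) :
    (∏ α ∈ Finset.univ.filter (fun α : Fin k → ZMod 2 => α ≠ 0),
        (∑ i : Fin k, (C (α i) * X i : MvPolynomial (Fin k) (ZMod 2))))
      = ∑ π : Equiv.Perm (Fin k), ∏ i : Fin k, (X (π i) : MvPolynomial (Fin k) (ZMod 2)) ^ 2 ^ (k - 1 - i.val) :=
  dickson_product_eq_perm_sum_general k
end

section
/- Let j ≥ 1 masses be placed on j pairwise disjoint intervals of the moment curve in ℝ^d, and suppose k affine hyperplanes equipart all j masses (each of the 2^k closed orthants receives measure 2^{−k} of each mass). Then the hyperplanes intersect the moment curve in at least (2^k − 1)j points; since k hyperplanes meet the moment curve in at most dk points, it follows that dk ≥ (2^k − 1)j, i.e., d ≥ ⌈(2^k − 1)j / k⌉. -/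
open MeasureTheory

open Polynomial in

lemma rootSetCard {d : ℕ} (w : Fin d → ℝ) (b : ℝ) (hw : w ≠ 0) :
    {t : ℝ | ∑ m : Fin d, w m * t ^ (m.val + 1) = b}.Finite ∧
    {t : ℝ | ∑ m : Fin d, w m * t ^ (m.val + 1) = b}.ncard ≤ d := by
  classical
  set P : ℝ[X] := (∑ m : Fin d, C (w m) * X ^ (m.val + 1)) - C b with hP
  have heval : ∀ t : ℝ, P.eval t = (∑ m : Fin d, w m * t ^ (m.val + 1)) - b := by
    intro t; simp [hP, eval_finset_sum]
  have hset : {t : ℝ | ∑ m : Fin d, w m * t ^ (m.val + 1) = b} = {t : ℝ | P.IsRoot t} := by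
    ext t; simp [IsRoot, heval, sub_eq_zero]
  obtain ⟨m₀, hm₀⟩ := Function.ne_iff.mp hw
  have hP0 : P ≠ 0 := by
    intro h
    have hc : P.coeff (m₀.val + 1) = w m₀ := by
      rw [hP]
      rw [coeff_sub, finset_sum_coeff]
      have : ∀ m : Fin d, (C (w m) * X ^ (m.val + 1)).coeff (m₀.val + 1)
          = if m = m₀ then w m else 0 := by
        intro m
        rw [coeff_C_mul, coeff_X_pow]
        by_cases hm : m = m₀ <;> simp [hm, Fin.val_eq_val]
        omega
      rw [Finset.sum_congr rfl (fun m _ => this m), Finset.sum_ite_eq' _ m₀]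
      simp [coeff_C]
    rw [h] at hc
    simp at hc
    exact hm₀ hc.symm
  have hdeg : P.natDegree ≤ d := by
    refine le_trans (natDegree_sub_le _ _) (max_le ?_ (by simp))
    refine natDegree_sum_le_of_forall_le _ _ fun m _ => ?_
    exact le_trans (natDegree_C_mul_X_pow_le _ _) m.2
  have hfin : {t : ℝ | P.IsRoot t}.Finite := P.finite_setOf_isRoot hP0
  constructor
  · rw [hset]; exact hfin
  · rw [hset]
    have h1 : {t : ℝ | P.IsRoot t} = ↑P.roots.toFinset := by
      ext t; simp [Multiset.mem_toFinset, mem_roots, hP0]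
    rw [h1, Set.ncard_coe_finset]
    exact le_trans (le_trans (Multiset.toFinset_card_le _) (P.card_roots')) hdeg


lemma countingLemma {k : ℕ} (S T : Set ℝ) (hSfin : S.Finite)
    (σ : ℝ → (Fin k → Bool))
    (hcross : ∀ t₁ t₂, t₁ ∈ T → t₂ ∈ T → t₁ < t₂ → σ t₁ ≠ σ t₂ →
      ∃ c ∈ S, t₁ < c ∧ c < t₂)
    (R : Finset ℝ) (hRT : ↑R ⊆ T) (hinj : Set.InjOn σ R) :
    R.card ≤ S.ncard + 1 := by
  classical
  rcases R.eq_empty_or_nonempty with h | hne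
  · simp [h]
  set r₀ := R.min' hne with hr₀
  have hr₀R : r₀ ∈ R := R.min'_mem hne
  set F : ℝ → ℝ := fun r => sSup (S ∩ Set.Ioo r₀ r) with hF
  have hcr : ∀ r₁ r₂, r₁ ∈ R → r₂ ∈ R → r₁ < r₂ → ∃ c ∈ S, r₁ < c ∧ c < r₂ := by
    intro r₁ r₂ h1 h2 hlt
    refine hcross r₁ r₂ (hRT h1) (hRT h2) hlt fun hσ => ?_
    exact (ne_of_lt hlt) (hinj h1 h2 hσ)
  have hkey : ∀ r ∈ R.erase r₀, F r ∈ S ∩ Set.Ioo r₀ r := by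
    intro r hr
    have hrR := Finset.mem_of_mem_erase hr
    have hlt : r₀ < r :=
      lt_of_le_of_ne (R.min'_le r hrR) (Ne.symm (Finset.ne_of_mem_erase hr))
    obtain ⟨c, hcS, hc1, hc2⟩ := hcr r₀ r hr₀R hrR hlt
    have hne' : (S ∩ Set.Ioo r₀ r).Nonempty := ⟨c, hcS, hc1, hc2⟩
    exact hne'.csSup_mem (hSfin.subset Set.inter_subset_left)
  have hinjF : Set.InjOn F ↑(R.erase r₀) := by
    have hmain : ∀ r₁ ∈ R.erase r₀, ∀ r₂ ∈ R.erase r₀, r₁ < r₂ → F r₁ ≠ F r₂ := by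
      intro r₁ h1 r₂ h2 hlt
      obtain ⟨c, hcS, hc1, hc2⟩ := hcr r₁ r₂ (Finset.mem_of_mem_erase h1)
        (Finset.mem_of_mem_erase h2) hlt
      have hF1 : F r₁ < r₁ := (hkey r₁ h1).2.2
      have hr₀1 : r₀ < r₁ :=
        lt_of_le_of_ne (R.min'_le r₁ (Finset.mem_of_mem_erase h1))
          (Ne.symm (Finset.ne_of_mem_erase h1))
      have hcmem : c ∈ S ∩ Set.Ioo r₀ r₂ := ⟨hcS, lt_trans hr₀1 hc1, hc2⟩
      have hle : c ≤ F r₂ :=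
        le_csSup ((hSfin.subset Set.inter_subset_left).bddAbove) hcmem
      exact ne_of_lt (lt_of_lt_of_le (lt_trans hF1 hc1) hle)
    intro r₁ h1 r₂ h2 heq
    rcases lt_trichotomy r₁ r₂ with h | h | h
    · exact absurd heq (hmain r₁ h1 r₂ h2 h)
    · exact h
    · exact absurd heq.symm (hmain r₂ h2 r₁ h1 h)
  have hcard : (R.erase r₀).card ≤ hSfin.toFinset.card := by
    refine Finset.card_le_card_of_injOn F (fun r hr => ?_) hinjF
    simpa using (hkey r hr).1
  rw [Finset.card_erase_of_mem hr₀R] at hcard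
  rw [Set.ncard_eq_toFinset_card S hSfin]
  omega

lemma perMass {d k : ℕ} (hd : 1 ≤ d)
    (v : Fin k → Fin d → ℝ) (a : Fin k → ℝ)
    (Z : Set ℝ) (hZ : Z = {t : ℝ | ∃ i : Fin k, ∑ m : Fin d, v i m * t ^ (m.val + 1) = a i})
    (hZfin : Z.Finite)
    (μ : Measure (Fin d → ℝ)) (s e : ℝ)
    (hsupp : μ (((fun t : ℝ => (fun i : Fin d => t ^ (i.val + 1))) '' Set.Ioo s e)ᶜ) = 0)
    (hnull : ∀ (w : Fin d → ℝ) (b : ℝ), w ≠ 0 → μ {x | ∑ i : Fin d, w i * x i = b} = 0)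
    (hequi : ∀ (α : Fin k → Bool),
      μ {x | ∀ i : Fin k,
          if α i then a i ≤ ∑ m : Fin d, v i m * x m
          else ∑ m : Fin d, v i m * x m ≤ a i} = 1 / 2 ^ k) :
    2 ^ k - 1 ≤ (Z ∩ Set.Ioo s e).ncard := by
  classical
  set f : Fin k → ℝ → ℝ := fun i t => (∑ m : Fin d, v i m * t ^ (m.val + 1)) - a i with hf
  have hfne : ∀ t, t ∉ Z → ∀ i, f i t ≠ 0 := by
    intro t ht i h
    exact ht (hZ ▸ ⟨i, sub_eq_zero.mp h⟩)
  have hfcont : ∀ i, Continuous (f i) := by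
    intro i
    apply Continuous.sub _ continuous_const
    exact continuous_finset_sum _ fun m _ => continuous_const.mul (continuous_pow (m.val + 1))
  set S : Set ℝ := Z ∩ Set.Ioo s e with hS
  have hSfin : S.Finite := hZfin.inter_of_left _
  set T : Set ℝ := Set.Ioo s e \ Z with hT
  set σ : ℝ → (Fin k → Bool) := fun t i => decide (0 < f i t) with hσ
  -- crossing property
  have hcross : ∀ t₁ t₂, t₁ ∈ T → t₂ ∈ T → t₁ < t₂ → σ t₁ ≠ σ t₂ →
      ∃ c ∈ S, t₁ < c ∧ c < t₂ := by
    intro t₁ t₂ ht₁ ht₂ hlt hne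
    obtain ⟨i, hi⟩ := Function.ne_iff.mp hne
    have h1 := hfne t₁ ht₁.2 i
    have h2 := hfne t₂ ht₂.2 i
    have hcont : ContinuousOn (f i) (Set.Icc t₁ t₂) := (hfcont i).continuousOn
    have hget : ∃ c ∈ Set.Ioo t₁ t₂, f i c = 0 := by
      by_cases hp : 0 < f i t₁
      · have hp2 : ¬ 0 < f i t₂ := by
          intro h; apply hi; simp [hσ, hp, h]
        have hneg : f i t₂ < 0 := lt_of_le_of_ne (not_lt.mp hp2) h2
        have h0 : (0 : ℝ) ∈ Set.Ioo (f i t₂) (f i t₁) := ⟨hneg, hp⟩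
        obtain ⟨c, hc, hfc⟩ := intermediate_value_Ioo' (le_of_lt hlt) hcont h0
        exact ⟨c, hc, hfc⟩
      · have hneg : f i t₁ < 0 := lt_of_le_of_ne (not_lt.mp hp) h1
        have hp2 : 0 < f i t₂ := by
          rcases lt_trichotomy 0 (f i t₂) with h | h | h
          · exact h
          · exact absurd h.symm h2
          · exfalso; apply hi; simp [hσ, hp, not_lt.mpr (le_of_lt h)]
        have h0 : (0 : ℝ) ∈ Set.Ioo (f i t₁) (f i t₂) := ⟨hneg, hp2⟩
        obtain ⟨c, hc, hfc⟩ := intermediate_value_Ioo (le_of_lt hlt) hcont h0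
        exact ⟨c, hc, hfc⟩
    obtain ⟨c, hc, hfc⟩ := hget
    refine ⟨c, ⟨hZ ▸ ⟨i, sub_eq_zero.mp hfc⟩, lt_trans ht₁.1.1 hc.1, lt_trans hc.2 ht₂.1.2⟩,
      hc.1, hc.2⟩
  by_contra hcon
  push_neg at hcon
  have hp2 : 1 ≤ 2 ^ k := Nat.one_le_two_pow
  have h2k : S.ncard + 1 < 2 ^ k := by omega
  -- representatives
  set rep : (Fin k → Bool) → ℝ := fun β => if h : ∃ t ∈ T, σ t = β then h.choose else 0 with hrep
  have hrepspec : ∀ β ∈ σ '' T, rep β ∈ T ∧ σ (rep β) = β := by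
    intro β hβ
    obtain ⟨t, ht, hσt⟩ := hβ
    have hex : ∃ t ∈ T, σ t = β := ⟨t, ht, hσt⟩
    rw [hrep]
    simp only [dif_pos hex]
    exact hex.choose_spec
  set V : Set (Fin k → Bool) := σ '' T with hV
  have hVfin : V.Finite := V.toFinite
  set R : Finset ℝ := hVfin.toFinset.image rep with hR
  have hRT : ↑R ⊆ T := by
    intro x hx
    rw [hR] at hx
    simp only [Finset.coe_image, Set.mem_image, Set.Finite.coe_toFinset] at hx
    obtain ⟨β, hβ, rfl⟩ := hx
    exact (hrepspec β hβ).1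
  have hinjσ : Set.InjOn σ ↑R := by
    intro x hx y hy hxy
    rw [hR] at hx hy
    simp only [Finset.coe_image, Set.mem_image, Set.Finite.coe_toFinset] at hx hy
    obtain ⟨β₁, hβ₁, rfl⟩ := hx
    obtain ⟨β₂, hβ₂, rfl⟩ := hy
    rw [(hrepspec β₁ hβ₁).2, (hrepspec β₂ hβ₂).2] at hxy
    rw [hxy]
  have hcard : R.card = hVfin.toFinset.card := by
    rw [hR]
    apply Finset.card_image_of_injOn
    intro β₁ hβ₁ β₂ hβ₂ h
    simp only [Finset.mem_coe, Set.Finite.mem_toFinset] at hβ₁ hβ₂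
    rw [← (hrepspec β₁ hβ₁).2, ← (hrepspec β₂ hβ₂).2, h]
  have hVcard : V.ncard ≤ S.ncard + 1 := by
    rw [Set.ncard_eq_toFinset_card V hVfin, ← hcard]
    exact countingLemma S T hSfin σ hcross R hRT hinjσ
  have hVne : V ≠ Set.univ := by
    intro h
    rw [h, Set.ncard_univ] at hVcard
    simp only [Nat.card_eq_fintype_card, Fintype.card_fun, Fintype.card_bool,
      Fintype.card_fin] at hVcard
    omega
  obtain ⟨α, hα⟩ := (Set.ne_univ_iff_exists_notMem _).mp hVne
  -- measure contradiction
  set γ : ℝ → (Fin d → ℝ) := fun t => fun i : Fin d => t ^ (i.val + 1) with hγ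
  have hOsub : {x : Fin d → ℝ | ∀ i : Fin k,
      if α i then a i ≤ ∑ m : Fin d, v i m * x m
      else ∑ m : Fin d, v i m * x m ≤ a i} ⊆
      ((γ '' Set.Ioo s e)ᶜ) ∪ (⋃ t ∈ S, {γ t}) := by
    intro x hx
    by_cases hxI : x ∈ γ '' Set.Ioo s e
    · right
      obtain ⟨t, htI, rfl⟩ := hxI
      have htZ : t ∈ Z := by
        by_contra htZ
        have htT : t ∈ T := ⟨htI, htZ⟩
        have hne : σ t ≠ α := fun h => hα (h ▸ Set.mem_image_of_mem σ htT)
        obtain ⟨i, hi⟩ := Function.ne_iff.mp hne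
        have hfi := hfne t htZ i
        have hxi := hx i
        have hsum : (∑ m : Fin d, v i m * γ t m) = f i t + a i := by
          simp [hγ, hf]
        by_cases hb : α i
        · rw [if_pos hb] at hxi
          rw [hsum] at hxi
          have hge : 0 ≤ f i t := by linarith
          have hσf : σ t i = false := by
            cases hc : σ t i
            · rfl
            · exact absurd (hb ▸ hc) hi
          rw [hσ] at hσf
          simp only [decide_eq_false_iff_not, not_lt] at hσf
          exact hfi (le_antisymm hσf hge)
        · rw [if_neg hb] at hxi
          rw [hsum] at hxi
          have hle : f i t ≤ 0 := by linarith
          have hσf : σ t i = true := by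
            cases hc : σ t i
            · exfalso; apply hi; rw [hc]; cases hb' : α i
              · rfl
              · exact absurd hb' hb
            · rfl
          rw [hσ] at hσf
          simp only [decide_eq_true_eq] at hσf
          exact hfi (le_antisymm hle (le_of_lt hσf))
      exact Set.mem_biUnion ⟨htZ, htI⟩ rfl
    · left; exact hxI
  have h1 : μ ((γ '' Set.Ioo s e)ᶜ) = 0 := hsupp
  have h2 : μ (⋃ t ∈ S, {γ t}) = 0 := by
    rw [measure_biUnion_null_iff hSfin.countable]
    intro t ht
    set w : Fin d → ℝ := fun m => if m = (⟨0, hd⟩ : Fin d) then 1 else 0 with hw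
    have hwne : w ≠ 0 := by
      intro h
      have := congrFun h ⟨0, hd⟩
      simp [hw] at this
    have hsub : {γ t} ⊆ {x : Fin d → ℝ | ∑ i : Fin d, w i * x i = t} := by
      intro x hx
      rw [Set.mem_singleton_iff] at hx
      subst hx
      simp [hw, hγ, ite_mul, Finset.sum_ite_eq']
    exact measure_mono_null hsub (hnull w t hwne)
  have hO0 : μ {x : Fin d → ℝ | ∀ i : Fin k,
      if α i then a i ≤ ∑ m : Fin d, v i m * x m
      else ∑ m : Fin d, v i m * x m ≤ a i} = 0 :=
    measure_mono_null hOsub (measure_union_null h1 h2)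
  rw [hequi α] at hO0
  simp [ENNReal.div_eq_zero_iff] at hO0

/-- **Ramos' lower bound.** Let `j ≥ 1` masses be placed on `j` pairwise disjoint
intervals of the moment curve `γ(t) = (t, …, t^d)` in `ℝ^d`, and suppose `k` affine
hyperplanes `H_i = {x : ⟨v_i, x⟩ = a_i}` equipart all `j` masses (each of the `2^k`
closed orthants receives measure `2^(-k)` of each mass). Then the hyperplanes intersect
the moment curve in at least `(2^k - 1) * j` points; since `k` hyperplanes meet the
moment curve in at most `d * k` points, it follows that `d * k ≥ (2^k - 1) * j`,
i.e. `d ≥ ⌈(2^k - 1) * j / k⌉`. -/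
theorem ramos_lower_bound (d k j : ℕ) (hd : 1 ≤ d) (hk : 1 ≤ k) (hj : 1 ≤ j)
    (μ : Fin j → Measure (Fin d → ℝ))
    (s e : Fin j → ℝ) (hse : ∀ ℓ, s ℓ < e ℓ)
    (hdisj : ∀ ℓ m : Fin j, ℓ ≠ m →
      Disjoint (Set.Ioo (s ℓ) (e ℓ)) (Set.Ioo (s m) (e m)))
    (hsupp : ∀ ℓ, μ ℓ
      (((fun t : ℝ => (fun i : Fin d => t ^ (i.val + 1))) '' Set.Ioo (s ℓ) (e ℓ))ᶜ) = 0)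
    (hprob : ∀ ℓ, μ ℓ Set.univ = 1)
    (hnull : ∀ (ℓ : Fin j) (w : Fin d → ℝ) (b : ℝ), w ≠ 0 →
      μ ℓ {x | ∑ i : Fin d, w i * x i = b} = 0)
    (v : Fin k → Fin d → ℝ) (a : Fin k → ℝ) (hv : ∀ i, v i ≠ 0)
    (hequi : ∀ (α : Fin k → Bool) (ℓ : Fin j),
      μ ℓ {x | ∀ i : Fin k,
          if α i then a i ≤ ∑ m : Fin d, v i m * x m
          else ∑ m : Fin d, v i m * x m ≤ a i} = 1 / 2 ^ k) :
    (2 ^ k - 1) * j ≤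
        {t : ℝ | ∃ i : Fin k, ∑ m : Fin d, v i m * t ^ (m.val + 1) = a i}.ncard ∧
    (2 ^ k - 1) * j ≤ d * k ∧
    ⌈((2 ^ k - 1 : ℚ) * j) / k⌉ ≤ (d : ℤ) := by
  classical
  set Z : Set ℝ := {t : ℝ | ∃ i : Fin k, ∑ m : Fin d, v i m * t ^ (m.val + 1) = a i} with hZ
  have hZi := fun i : Fin k => rootSetCard (v i) (a i) (hv i)
  have hZun : Z = ⋃ i : Fin k, {t : ℝ | ∑ m : Fin d, v i m * t ^ (m.val + 1) = a i} := by
    ext t; simp [hZ]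
  have hZfin : Z.Finite := by
    rw [hZun]; exact Set.finite_iUnion fun i => (hZi i).1
  have hmass : ∀ ℓ, 2 ^ k - 1 ≤ (Z ∩ Set.Ioo (s ℓ) (e ℓ)).ncard := fun ℓ =>
    perMass hd v a Z hZ hZfin (μ ℓ) (s ℓ) (e ℓ) (hsupp ℓ) (hnull ℓ) (fun α => hequi α ℓ)
  have hfinℓ : ∀ ℓ, (Z ∩ Set.Ioo (s ℓ) (e ℓ)).Finite := fun ℓ => hZfin.inter_of_left _
  have h1 : (2 ^ k - 1) * j ≤ Z.ncard := by
    have hsubbi : (Finset.univ.biUnion fun ℓ : Fin j => (hfinℓ ℓ).toFinset)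
        ⊆ hZfin.toFinset := by
      intro t ht
      simp only [Finset.mem_biUnion, Set.Finite.mem_toFinset] at ht ⊢
      obtain ⟨ℓ, _, h⟩ := ht
      exact h.1
    have hdisjF : ∀ ℓ ∈ (Finset.univ : Finset (Fin j)), ∀ m ∈ Finset.univ, ℓ ≠ m →
        Disjoint ((hfinℓ ℓ).toFinset) ((hfinℓ m).toFinset) := by
      intro ℓ _ m _ hne
      rw [Finset.disjoint_left]
      intro t ht ht'
      rw [Set.Finite.mem_toFinset] at ht ht'
      exact Set.disjoint_left.mp (hdisj ℓ m hne) ht.2 ht'.2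
    calc (2 ^ k - 1) * j = ∑ _ℓ : Fin j, (2 ^ k - 1) := by
          simp [mul_comm]
      _ ≤ ∑ ℓ : Fin j, ((hfinℓ ℓ).toFinset).card := by
          refine Finset.sum_le_sum fun ℓ _ => ?_
          rw [← Set.ncard_eq_toFinset_card _ (hfinℓ ℓ)]
          exact hmass ℓ
      _ = (Finset.univ.biUnion fun ℓ : Fin j => (hfinℓ ℓ).toFinset).card :=
          (Finset.card_biUnion hdisjF).symm
      _ ≤ hZfin.toFinset.card := Finset.card_le_card hsubbi
      _ = Z.ncard := (Set.ncard_eq_toFinset_card Z hZfin).symm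
  have h2 : Z.ncard ≤ d * k := by
    have hsub : hZfin.toFinset ⊆ Finset.univ.biUnion fun i : Fin k =>
        ((hZi i).1).toFinset := by
      intro t ht
      rw [Set.Finite.mem_toFinset] at ht
      obtain ⟨i, hi⟩ := ht
      simp only [Finset.mem_biUnion, Set.Finite.mem_toFinset]
      exact ⟨i, Finset.mem_univ i, hi⟩
    calc Z.ncard = hZfin.toFinset.card := Set.ncard_eq_toFinset_card Z hZfin
      _ ≤ (Finset.univ.biUnion fun i : Fin k => ((hZi i).1).toFinset).card :=
          Finset.card_le_card hsub
      _ ≤ ∑ i : Fin k, ((hZi i).1).toFinset.card := Finset.card_biUnion_le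
      _ ≤ ∑ _i : Fin k, d := by
          refine Finset.sum_le_sum fun i _ => ?_
          rw [← Set.ncard_eq_toFinset_card _ (hZi i).1]
          exact (hZi i).2
      _ = d * k := by simp [mul_comm]
  have h12 : (2 ^ k - 1) * j ≤ d * k := le_trans h1 h2
  refine ⟨h1, h12, ?_⟩
  rw [Int.ceil_le]
  have hkq : (0 : ℚ) < (k : ℚ) := by exact_mod_cast hk
  rw [div_le_iff₀ hkq]
  have hcast := (Nat.cast_le (α := ℚ)).mpr h12
  push_cast [Nat.cast_sub (Nat.one_le_two_pow (n := k))] at hcast ⊢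
  linarith
end

section
/- Suppose a continuous ℤ/4-equivariant map Ψ : Γ → S¹ exists, where the ℤ/4 generator acts on Γ ≅ S¹ by rotation u ↦ iu and on the codomain S¹ antipodally (z ↦ −z). Then deg Ψ ≡ 2 (mod 4); in particular deg Ψ ≠ 0. -/
/-!
Equivariance says that turning the source a quarter of the way round sends the image to its
antipode, so a lift `g` of `Ψ` satisfies `g (t + 1/4) - g t ∈ 1/2 + ℤ` for every `t`. By
continuity this half-integer is a constant `k + 1/2`, and going once round the circle in four
quarter steps gives `g 1 - g 0 = 4k + 2`.
-/

open Complex Real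

lemma eq_of_continuous_of_forall_mem_range_intCast {X : Type*} [TopologicalSpace X]
    [PreconnectedSpace X] {f : X → ℝ} (hf : Continuous f)
    (hint : ∀ x, f x ∈ Set.range ((↑) : ℤ → ℝ)) (x y : X) : f x = f y :=
  isPreconnected_univ.constant_of_mapsTo Int.isClosedEmbedding_coe_real.isInducing.isDiscrete_range
    hf.continuousOn (fun x _ ↦ hint x) trivial trivial

namespace Complex

lemma exp_two_pi_mul_I_mul_add_quarter (z : ℂ) :
    exp (2 * π * I * (z + 1 / 4)) = I * exp (2 * π * I * z) := by
  rw [mul_add, exp_add, show 2 * π * I * (1 / 4) = (π / 2 : ℝ) * I by push_cast; ring,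
    exp_mul_I, ← ofReal_cos, ← ofReal_sin, Real.cos_pi_div_two, Real.sin_pi_div_two]
  simp [mul_comm]

lemma exp_two_pi_mul_I_mul_add_half (z : ℂ) :
    exp (2 * π * I * (z + 1 / 2)) = -exp (2 * π * I * z) := by
  rw [mul_add, exp_add, show 2 * π * I * (1 / 2) = π * I by ring, exp_pi_mul_I, mul_neg_one]

lemma exp_two_pi_mul_I_mul_ofReal_eq_iff {a b : ℝ} :
    exp (2 * π * I * a) = exp (2 * π * I * b) ↔ ∃ n : ℤ, a = b + n := by
  have h2piI : 2 * π * I ≠ 0 := by simp [Real.pi_ne_zero, I_ne_zero]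
  simp only [exp_eq_exp_iff_exists_int]
  refine exists_congr fun n ↦ ?_
  rw [← ofReal_inj, mul_comm (n : ℂ), ← mul_add, mul_right_inj' h2piI]
  push_cast
  rfl

end Complex

lemma lift_add_quarter_sub_lift_sub_half_mem_range_intCast {Ψ : ℂ → ℂ}
    (hequiv : ∀ z : ℂ, ‖z‖ = 1 → Ψ (I * z) = -(Ψ z)) {g : ℝ → ℝ}
    (hlift : ∀ t : ℝ, Ψ (exp (2 * π * I * t)) = exp (2 * π * I * (g t))) (t : ℝ) :
    g (t + 1 / 4) - g t - 1 / 2 ∈ Set.range ((↑) : ℤ → ℝ) := by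
  have hrotate : exp (2 * π * I * (g (t + 1 / 4))) = exp (2 * π * I * (g t + 1 / 2 : ℝ)) := by
    have hnorm : ‖exp (2 * π * I * t)‖ = 1 := by simp [norm_exp]
    rw [← hlift]
    push_cast
    rw [exp_two_pi_mul_I_mul_add_quarter, hequiv _ hnorm, hlift,
      exp_two_pi_mul_I_mul_add_half]
  obtain ⟨n, hn⟩ := exp_two_pi_mul_I_mul_ofReal_eq_iff.mp hrotate
  exact ⟨n, by rw [hn]; ring⟩

lemma exists_int_forall_lift_add_quarter {Ψ : ℂ → ℂ}
    (hequiv : ∀ z : ℂ, ‖z‖ = 1 → Ψ (I * z) = -(Ψ z)) {g : ℝ → ℝ} (hg : Continuous g)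
    (hlift : ∀ t : ℝ, Ψ (exp (2 * π * I * t)) = exp (2 * π * I * (g t))) :
    ∃ k : ℤ, ∀ t, g (t + 1 / 4) = g t + (k + 1 / 2) := by
  have hcont : Continuous fun t ↦ g (t + 1 / 4) - g t - 1 / 2 := by fun_prop
  have hint := lift_add_quarter_sub_lift_sub_half_mem_range_intCast hequiv hlift
  obtain ⟨k, hk⟩ := hint 0
  refine ⟨k, fun t ↦ ?_⟩
  have := eq_of_continuous_of_forall_mem_range_intCast hcont hint t 0
  linarith

theorem equivariant_circle_map_degree_two_mod_four_general
    (Ψ : ℂ → ℂ)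
    (hequiv : ∀ z : ℂ, ‖z‖ = 1 → Ψ (Complex.I * z) = -(Ψ z))
    (g : ℝ → ℝ) (hg : Continuous g)
    (hlift : ∀ t : ℝ, Ψ (Complex.exp (2 * Real.pi * Complex.I * t)) =
      Complex.exp (2 * Real.pi * Complex.I * (g t))) :
    ∃ n : ℤ, (g 1 - g 0 : ℝ) = n ∧ (n : ZMod 4) = 2 ∧ n ≠ 0 := by
  obtain ⟨k, hk⟩ := exists_int_forall_lift_add_quarter hequiv hg hlift
  have hround : g 1 - g 0 = 4 * k + 2 := by
    have h1 := hk 0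
    have h2 := hk (1 / 4)
    have h3 := hk (1 / 2)
    have h4 := hk (3 / 4)
    norm_num at h1 h2 h3 h4
    linarith
  refine ⟨4 * k + 2, by push_cast; exact hround, ?_, by omega⟩
  push_cast
  rw [show (4 : ZMod 4) = 0 from rfl, zero_mul, zero_add]

/-- Suppose a continuous `ℤ/4`-equivariant map `Ψ : Γ → S¹` exists, where the generator
of `ℤ/4` acts on `Γ ≅ S¹` by the rotation `u ↦ i·u` and on the codomain `S¹` antipodally
(`z ↦ -z`). Then `deg Ψ ≡ 2 (mod 4)`; in particular `deg Ψ ≠ 0`. The degree is expressed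
through any continuous lift `g` with `Ψ(e^{2πit}) = e^{2πi g(t)}`: the difference
`g 1 - g 0` is an integer congruent to `2` mod `4`, and nonzero. -/
theorem equivariant_circle_map_degree_two_mod_four
    (Ψ : ℂ → ℂ) (hcont : Continuous Ψ)
    (hsph : ∀ z : ℂ, ‖z‖ = 1 → ‖Ψ z‖ = 1)
    (hequiv : ∀ z : ℂ, ‖z‖ = 1 → Ψ (Complex.I * z) = -(Ψ z))
    (g : ℝ → ℝ) (hg : Continuous g)
    (hlift : ∀ t : ℝ, Ψ (Complex.exp (2 * Real.pi * Complex.I * t)) =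
      Complex.exp (2 * Real.pi * Complex.I * (g t))) :
    ∃ n : ℤ, (g 1 - g 0 : ℝ) = n ∧ (n : ZMod 4) = 2 ∧ n ≠ 0 :=
  equivariant_circle_map_degree_two_mod_four_general Ψ hequiv g hg hlift
end

section
/- The dimension-2 cohomology with ℤ/2 coefficients of the wreath-product group W_4 = (ℤ/2)^4 ⋊ S_4 (signed permutation group on 4 elements) has F₂-dimension at least 5; in particular H²(W_4; ℤ/2) is not isomorphic to (ℤ/2)². -/
/-!
Five cohomology classes of `W₄` are written down as explicit 2-cocycles: the three cup products
of the two characters of `W₄` (parity of the number of sign changes, sign of the permutation); a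
class restricting on `(ℤ/2)⁴` to the `S₄`-invariant quadratic form `∑_{i<j} xᵢxⱼ`, built from a
non-invariant bilinear form plus a correction term on `S₄`; and the inflation of the class of the
double cover `GL₂(𝔽₃) → PGL₂(𝔽₃) ≅ S₄`. They are independent because five linear functionals on
2-cocycles which vanish on coboundaries (restrictions to cyclic subgroups and a commutator
pairing) take the values of the identity matrix on them.
-/

open Multiplicative

/-- The permutation `σ ∈ S₄` acting on `(ℤ/2)⁴` (written multiplicatively) by
permuting coordinates. -/
def permAut (σ : Equiv.Perm (Fin 4)) :
    Multiplicative (Fin 4 → ZMod 2) ≃* Multiplicative (Fin 4 → ZMod 2) where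
  toFun f := ofAdd (fun i => toAdd f (σ.symm i))
  invFun f := ofAdd (fun i => toAdd f (σ i))
  left_inv f := by simp
  right_inv f := by simp
  map_mul' f g := rfl

/-- The action homomorphism `S₄ →* Aut((ℤ/2)⁴)` by permuting coordinates. -/
def permHom : Equiv.Perm (Fin 4) →* MulAut (Multiplicative (Fin 4 → ZMod 2)) where
  toFun σ := permAut σ
  map_one' := by ext f; rfl
  map_mul' σ τ := by ext f; rfl

/-- The signed permutation group `W₄ = (ℤ/2)⁴ ⋊ S₄`. -/
abbrev W4 : Type :=
  SemidirectProduct (Multiplicative (Fin 4 → ZMod 2)) (Equiv.Perm (Fin 4)) permHom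

open groupCohomology Finset Equiv

universe u

section Biorthogonal

variable {k G : Type u} [CommRing k] [Group G] {A : Rep k G}

theorem linearIndependent_H2π_of_biorthogonal {ι : Type*} [Fintype ι] [DecidableEq ι]
    (c : ι → G × G → A) (hc : ∀ j, c j ∈ cocycles₂ A) (L : ι → (G × G → A) →ₗ[k] k)
    (hL : ∀ i, ∀ f ∈ coboundaries₂ A, L i f = 0)
    (hLc : ∀ i j, L i (c j) = if i = j then 1 else 0) :
    LinearIndependent k fun j => H2π A ⟨c j, hc j⟩ := by
  rw [Fintype.linearIndependent_iff]
  intro a ha i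
  have hcob : ∑ j, a j • c j ∈ coboundaries₂ A := by
    have h := (H2π_eq_zero_iff (∑ j, a j • ⟨c j, hc j⟩)).1 (by simpa only [map_sum, map_smul])
    simpa only [← cocycles₂.val_eq_coe, Submodule.coe_sum, Submodule.coe_smul] using h
  simpa [map_sum, hLc] using hL i _ hcob

end Biorthogonal

section TrivialCoefficients

variable {k G : Type u} [CommRing k] [Group G]

/-- On a cyclic group `⟨g⟩` of order `n`, `cyclicFunctional g n` induces the standard
isomorphism `H²(ℤ/n; k) ≅ k/nk`; `swapFunctional g h` is the commutator pairing of the central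
extension restricted to `⟨g, h⟩`. -/
def cyclicFunctional (g : G) (n : ℕ) : (G × G → k) →ₗ[k] k where
  toFun f := ∑ i ∈ range n, f (g ^ i, g)
  map_add' f f' := sum_add_distrib
  map_smul' c f := by simp [mul_sum]

def swapFunctional (g h : G) : (G × G → k) →ₗ[k] k where
  toFun f := f (g, h) - f (h, g)
  map_add' f f' := by simp only [Pi.add_apply]; abel
  map_smul' c f := by simp [mul_sub]

theorem cyclicFunctional_eq_zero_of_mem_coboundaries₂ {g : G} {n : ℕ} (hg : g ^ n = 1)
    (hn : (n : k) = 0) {f : G × G → k} (hf : f ∈ coboundaries₂ (Rep.trivial k G k)) :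
    cyclicFunctional g n f = 0 := by
  obtain ⟨x, rfl⟩ := hf
  have htel := sum_range_sub (fun i => x (g ^ i)) n
  rw [hg, pow_zero, sub_self] at htel
  calc ∑ i ∈ range n, (x g - x (g ^ i * g) + x (g ^ i))
      = n • x g - ∑ i ∈ range n, (x (g ^ (i + 1)) - x (g ^ i)) := by
        simp only [← pow_succ, sum_sub_distrib, sum_add_distrib, sum_const, card_range]; abel
    _ = 0 := by rw [htel, sub_zero, nsmul_eq_mul, hn, zero_mul]

theorem swapFunctional_eq_zero_of_mem_coboundaries₂ {g h : G} (hgh : Commute g h)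
    {f : G × G → k} (hf : f ∈ coboundaries₂ (Rep.trivial k G k)) :
    swapFunctional g h f = 0 := by
  obtain ⟨x, rfl⟩ := hf
  show x h - x (g * h) + x g - (x g - x (h * g) + x h) = 0
  rw [hgh.eq]
  abel

def cupChar (φ ψ : G →* Multiplicative k) (p : G × G) : k :=
  toAdd (φ p.1) * toAdd (ψ p.2)

theorem cupChar_mem_cocycles₂ (φ ψ : G →* Multiplicative k) :
    cupChar φ ψ ∈ cocycles₂ (Rep.trivial k G k) := by
  rw [mem_cocycles₂_def]
  intro g h j
  simp only [cupChar, Representation.trivial_apply, map_mul, toAdd_mul]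
  ring

end TrivialCoefficients

section ProjectiveLift

variable {G : Type} {M : Type*} [Group G] [Monoid M] {z : M}

theorem natCast_eq_of_pow_mul_eq (hzz : z * z = 1) {t : M} (ht : z * t ≠ t) {m n : ℕ}
    (h : z ^ m * t = z ^ n * t) : (m : ZMod 2) = n := by
  have hmod : ∀ m, z ^ m = z ^ (m % 2) := fun m => by
    conv_lhs => rw [← Nat.mod_add_div m 2, pow_add, pow_mul, sq, hzz, one_pow, mul_one]
  rw [hmod m, hmod n] at h
  rw [ZMod.natCast_eq_natCast_iff']
  rcases Nat.mod_two_eq_zero_or_one m with hm | hm <;>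
    rcases Nat.mod_two_eq_zero_or_one n with hn | hn <;>
    simp only [hm, hn, pow_zero, pow_one, one_mul] at h ⊢
  exacts [absurd h.symm ht, absurd h ht]

variable [DecidableEq M]

def liftSign (s : G → M) (p : G × G) : ZMod 2 :=
  if s p.1 * s p.2 = s (p.1 * p.2) then 0 else 1

variable {s : G → M}

theorem mul_eq_pow_liftSign_mul
    (hs : ∀ a b, s a * s b = s (a * b) ∨ s a * s b = z * s (a * b)) (a b : G) :
    s a * s b = z ^ (liftSign s (a, b)).val * s (a * b) := by
  unfold liftSign
  split_ifs with h
  · rw [ZMod.val_zero, pow_zero, one_mul, h]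
  · rw [ZMod.val_one, pow_one, (hs a b).resolve_left h]

theorem liftSign_mem_cocycles₂ (hz : ∀ m, Commute z m) (hzz : z * z = 1)
    (hfix : ∀ g, z * s g ≠ s g) (hs : ∀ a b, s a * s b = s (a * b) ∨ s a * s b = z * s (a * b)) :
    liftSign s ∈ cocycles₂ (Rep.trivial (ZMod 2) G (ZMod 2)) := by
  rw [mem_cocycles₂_def]
  intro a b c
  have hmul := mul_eq_pow_liftSign_mul hs
  have hleft : s a * s b * s c = z ^ ((liftSign s (a, b)).val + (liftSign s (a * b, c)).val) *
      s (a * b * c) := by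
    rw [hmul a b, mul_assoc, hmul (a * b) c, ← mul_assoc, ← pow_add]
  have hright : s a * (s b * s c) = z ^ ((liftSign s (b, c)).val + (liftSign s (a, b * c)).val) *
      s (a * b * c) := by
    rw [hmul b c, ← mul_assoc, ((hz (s a)).pow_left _).eq.symm, mul_assoc, hmul a (b * c),
      ← mul_assoc, ← pow_add, mul_assoc]
  have h := natCast_eq_of_pow_mul_eq hzz (hfix (a * b * c))
    (hleft.symm.trans ((mul_assoc _ _ _).trans hright))
  simp only [Nat.cast_add, ZMod.natCast_zmod_val] at h
  simp only [Representation.trivial_apply]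
  linear_combination -h

end ProjectiveLift

section InversionForm

variable {α R : Type*} [Fintype α] [LinearOrder α] [CommRing R]

def lowerForm (x y : α → R) : R :=
  ∑ i, ∑ j, if j < i then x i * y j else 0

def inversionForm (ρ : Perm α) (v : α → R) : R :=
  ∑ i, ∑ j, if i < j ∧ ρ j < ρ i then v i * v j else 0

theorem lowerForm_add_left (x x' y : α → R) :
    lowerForm (x + x') y = lowerForm x y + lowerForm x' y := by
  simp only [lowerForm, ← sum_add_distrib, Pi.add_apply, add_mul, ite_add_ite, add_zero]

theorem lowerForm_add_right (x y y' : α → R) :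
    lowerForm x (y + y') = lowerForm x y + lowerForm x y' := by
  simp only [lowerForm, ← sum_add_distrib, Pi.add_apply, mul_add, ite_add_ite, add_zero]

omit [LinearOrder α] in
theorem sum_sum_ite_comp_perm (ρ : Perm α) (p : α → α → Prop) [DecidableRel p]
    (f : α → α → R) :
    ∑ i, ∑ j, (if p i j then f (ρ.symm i) (ρ.symm j) else 0) =
      ∑ a, ∑ b, if p (ρ a) (ρ b) then f a b else 0 := by
  rw [← Equiv.sum_comp ρ]
  refine sum_congr rfl fun a _ => ?_
  rw [← Equiv.sum_comp ρ]
  simp only [symm_apply_apply]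

variable [CharP R 2]

theorem lowerForm_comp_symm_sub (ρ : Perm α) (x y : α → R) :
    lowerForm (x ∘ ρ.symm) (y ∘ ρ.symm) - lowerForm x y =
      inversionForm ρ (x + y) - inversionForm ρ x - inversionForm ρ y := by
  have hperm : lowerForm (x ∘ ρ.symm) (y ∘ ρ.symm) =
      ∑ a, ∑ b, if ρ b < ρ a then x a * y b else 0 :=
    sum_sum_ite_comp_perm ρ (fun i j => j < i) (fun a b => x a * y b)
  have hpol : inversionForm ρ (x + y) - inversionForm ρ x - inversionForm ρ y =
      ∑ a, ∑ b, ((if a < b ∧ ρ b < ρ a then x a * y b else 0) +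
        if b < a ∧ ρ a < ρ b then x a * y b else 0) := by
    simp only [sum_add_distrib]
    rw [sum_comm (f := fun a b => if b < a ∧ ρ a < ρ b then x a * y b else 0)]
    simp only [inversionForm, ← sum_sub_distrib, ← sum_add_distrib, Pi.add_apply]
    refine sum_congr rfl fun a _ => sum_congr rfl fun b _ => ?_
    split_ifs <;> ring
  rw [hperm, hpol, lowerForm, ← sum_sub_distrib]
  refine sum_congr rfl fun a _ => ?_
  rw [← sum_sub_distrib]
  refine sum_congr rfl fun b _ => ?_
  rcases lt_trichotomy a b with hab | rfl | hab
  · simp [hab, hab.not_gt]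
  · simp
  · have hρ : ρ a ≠ ρ b := ρ.injective.ne hab.ne'
    rcases hρ.lt_or_gt with h | h <;> simp [hab, hab.not_gt, h, h.not_gt, CharTwo.neg_eq]

theorem inversionForm_mul (ρ σ : Perm α) (w : α → R) :
    inversionForm (ρ * σ) w = inversionForm σ w + inversionForm ρ (w ∘ σ.symm) := by
  have hperm : inversionForm ρ (w ∘ σ.symm) =
      ∑ a, ∑ b, if σ a < σ b ∧ ρ (σ b) < ρ (σ a) then w a * w b else 0 :=
    sum_sum_ite_comp_perm σ (fun i j => i < j ∧ ρ j < ρ i) (fun a b => w a * w b)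
  have hsplit : ∑ a, ∑ b, (if σ a < σ b ∧ ρ (σ b) < ρ (σ a) then w a * w b else 0) =
      ∑ a, ∑ b, ((if a < b ∧ σ a < σ b ∧ ρ (σ b) < ρ (σ a) then w a * w b else 0) +
        if a < b ∧ σ b < σ a ∧ ρ (σ a) < ρ (σ b) then w a * w b else 0) := by
    simp only [sum_add_distrib]
    rw [sum_comm (f := fun a b => if a < b ∧ σ b < σ a ∧ ρ (σ a) < ρ (σ b) then w a * w b else 0),
      ← sum_add_distrib]
    refine sum_congr rfl fun a _ => ?_
    rw [← sum_add_distrib]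
    refine sum_congr rfl fun b _ => ?_
    rcases lt_trichotomy a b with hab | rfl | hab
    · simp [hab, hab.not_gt]
    · simp
    · simp [hab, hab.not_gt, mul_comm]
  rw [hperm, hsplit, inversionForm, inversionForm, ← sum_add_distrib]
  refine sum_congr rfl fun a _ => ?_
  rw [← sum_add_distrib]
  refine sum_congr rfl fun b _ => ?_
  simp only [Perm.mul_apply]
  by_cases hab : a < b
  · have hσ : σ a ≠ σ b := σ.injective.ne hab.ne
    have hτ : ρ (σ a) ≠ ρ (σ b) := ρ.injective.ne hσ
    rcases hσ.lt_or_gt with h1 | h1 <;> rcases hτ.lt_or_gt with h2 | h2 <;>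
      simp [hab, h1, h1.not_gt, h2, h2.not_gt, CharTwo.add_self_eq_zero]
  · simp [hab]

end InversionForm

section SemidirectProduct

variable {k N H : Type u} [CommRing k] [Group N] [Group H] {φ : H →* MulAut N}

def twistedBilinCochain (β : N → N → k) (q : H → N → k) (p : (N ⋊[φ] H) × (N ⋊[φ] H)) : k :=
  β p.1.left (φ p.1.right p.2.left) + q p.1.right p.2.left

theorem twistedBilinCochain_mem_cocycles₂ (β : N → N → k) (q : H → N → k)
    (hβl : ∀ n n' m, β (n * n') m = β n m + β n' m)
    (hβr : ∀ n m m', β n (m * m') = β n m + β n m')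
    (hβφ : ∀ h n m, β (φ h n) (φ h m) - β n m = q h (n * m) - q h n - q h m)
    (hq : ∀ h h' n, q (h * h') n = q h' n + q h (φ h' n)) :
    twistedBilinCochain β q ∈ cocycles₂ (Rep.trivial k (N ⋊[φ] H) k) := by
  rw [mem_cocycles₂_def]
  rintro ⟨u, ρ⟩ ⟨v, σ⟩ ⟨w, τ⟩
  simp only [twistedBilinCochain, Representation.trivial_apply, SemidirectProduct.mul_left,
    SemidirectProduct.mul_right, map_mul, MulAut.mul_apply, hβl, hβr, hq]
  linear_combination -hβφ ρ v (φ σ w)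

end SemidirectProduct

def projLinePoint : Fin 4 → Fin 2 → ZMod 3 := ![![1, 0], ![0, 1], ![1, 1], ![1, 2]]

/-- `pglLift σ` sends the lines through `projLinePoint 0, 1` and (by Cramer's rule)
`projLinePoint 2` to those through `projLinePoint (σ 0), (σ 1), (σ 2)`, so it induces `σ` on the
four points of `ℙ¹(𝔽₃)`; two matrices inducing the same permutation differ by a scalar `±1`. -/
def pglLift (σ : Perm (Fin 4)) : Matrix (Fin 2) (Fin 2) (ZMod 3) :=
  let p i := projLinePoint (σ i)
  let cross (u w : Fin 2 → ZMod 3) := u 0 * w 1 - u 1 * w 0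
  (Matrix.of ![cross (p 2) (p 1) • p 0, cross (p 0) (p 2) • p 1]).transpose

theorem pglLift_mul_pglLift (ρ σ : Perm (Fin 4)) : pglLift ρ * pglLift σ = pglLift (ρ * σ) ∨
    pglLift ρ * pglLift σ = -1 * pglLift (ρ * σ) := by
  revert ρ σ
  decide

theorem neg_one_mul_pglLift_ne (σ : Perm (Fin 4)) : -1 * pglLift σ ≠ pglLift σ := by
  revert σ
  decide

namespace W4

def flipParity : W4 →* Multiplicative (ZMod 2) where
  toFun g := ofAdd (∑ i, toAdd g.left i)
  map_one' := by simp
  map_mul' g h := by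
    simp only [SemidirectProduct.mul_left, toAdd_mul, Pi.add_apply, sum_add_distrib, ofAdd_add]
    congr 2
    exact Equiv.sum_comp g.right.symm (toAdd h.left)

def signParity : W4 →* Multiplicative (ZMod 2) where
  toFun g := ofAdd (if Perm.sign g.right = 1 then 0 else 1)
  map_one' := by simp
  map_mul' g h := by
    rw [SemidirectProduct.mul_right, Perm.sign_mul]
    rcases Int.units_eq_one_or (Perm.sign g.right) with hg | hg <;>
      rcases Int.units_eq_one_or (Perm.sign h.right) with hh | hh <;>
      rw [hg, hh] <;> decide

/-- On `(ℤ/2)⁴` this is the bilinear form `∑_{j<i} xᵢyⱼ`, whose quadratic form `∑_{i<j} xᵢxⱼ` is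
`S₄`-invariant although the form itself is not; `inversionForm` absorbs the defect. -/
def quadraticCocycle : W4 × W4 → ZMod 2 :=
  twistedBilinCochain (fun n m => lowerForm (toAdd n) (toAdd m))
    (fun ρ n => inversionForm ρ (toAdd n))

theorem quadraticCocycle_mem_cocycles₂ :
    quadraticCocycle ∈ cocycles₂ (Rep.trivial (ZMod 2) W4 (ZMod 2)) :=
  twistedBilinCochain_mem_cocycles₂ _ _ (fun _ _ _ => lowerForm_add_left _ _ _)
    (fun _ _ _ => lowerForm_add_right _ _ _)
    (fun ρ n m => lowerForm_comp_symm_sub ρ (toAdd n) (toAdd m))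
    (fun ρ σ n => inversionForm_mul ρ σ (toAdd n))

def gl23Cocycle : W4 × W4 → ZMod 2 := liftSign fun g : W4 => pglLift g.right

theorem gl23Cocycle_mem_cocycles₂ :
    gl23Cocycle ∈ cocycles₂ (Rep.trivial (ZMod 2) W4 (ZMod 2)) :=
  liftSign_mem_cocycles₂ Commute.neg_one_left (by norm_num)
    (fun g => neg_one_mul_pglLift_ne g.right) (fun g h => pglLift_mul_pglLift g.right h.right)

def classReps : Fin 5 → W4 × W4 → ZMod 2 :=
  ![cupChar flipParity flipParity, cupChar flipParity signParity, cupChar signParity signParity,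
    quadraticCocycle, gl23Cocycle]

theorem classReps_mem_cocycles₂ (j : Fin 5) :
    classReps j ∈ cocycles₂ (Rep.trivial (ZMod 2) W4 (ZMod 2)) := by
  fin_cases j
  exacts [cupChar_mem_cocycles₂ _ _, cupChar_mem_cocycles₂ _ _, cupChar_mem_cocycles₂ _ _,
    quadraticCocycle_mem_cocycles₂, gl23Cocycle_mem_cocycles₂]

def flip1 : W4 := ⟨ofAdd ![0, 1, 0, 0], 1⟩
def flip3 : W4 := ⟨ofAdd ![0, 0, 0, 1], 1⟩
def swap23 : W4 := ⟨1, swap 2 3⟩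
def flipSwap : W4 := ⟨ofAdd ![0, 0, 0, 1], swap 2 3⟩
def doubleSwap : W4 := ⟨1, swap 0 1 * swap 2 3⟩

def detectors : Fin 5 → (W4 × W4 → ZMod 2) →ₗ[ZMod 2] ZMod 2 :=
  ![cyclicFunctional flip3 2, swapFunctional swap23 flip1, cyclicFunctional swap23 2,
    cyclicFunctional flipSwap 4, cyclicFunctional doubleSwap 2]

theorem detectors_eq_zero_of_mem_coboundaries₂ (i : Fin 5) (f : W4 × W4 → ZMod 2)
    (hf : f ∈ coboundaries₂ (Rep.trivial (ZMod 2) W4 (ZMod 2))) : detectors i f = 0 := by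
  fin_cases i
  · exact cyclicFunctional_eq_zero_of_mem_coboundaries₂
      (by apply SemidirectProduct.ext <;> decide) (by decide) hf
  · exact swapFunctional_eq_zero_of_mem_coboundaries₂
      (by apply SemidirectProduct.ext <;> decide) hf
  · exact cyclicFunctional_eq_zero_of_mem_coboundaries₂
      (by apply SemidirectProduct.ext <;> decide) (by decide) hf
  · exact cyclicFunctional_eq_zero_of_mem_coboundaries₂
      (by apply SemidirectProduct.ext <;> decide) (by decide) hf
  · exact cyclicFunctional_eq_zero_of_mem_coboundaries₂
      (by apply SemidirectProduct.ext <;> decide) (by decide) hf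

theorem detectors_classReps (i j : Fin 5) :
    detectors i (classReps j) = if i = j then 1 else 0 := by
  revert i j
  decide

end W4

/-- The second cohomology `H²(W₄; F₂)` of the signed permutation group
`W₄ = (ℤ/2)⁴ ⋊ S₄` with (trivial) `F₂`-coefficients has `F₂`-dimension at least `5`;
in particular it is not isomorphic to `(ℤ/2)²`. -/
theorem h2_W4_rank_ge_five :
    5 ≤ Module.rank (ZMod 2)
        (groupCohomology (Rep.trivial (ZMod 2) W4 (ZMod 2)) 2) ∧
    IsEmpty ((groupCohomology (Rep.trivial (ZMod 2) W4 (ZMod 2)) 2) ≃ₗ[ZMod 2]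
        (ZMod 2 × ZMod 2)) := by
  have hli := linearIndependent_H2π_of_biorthogonal (A := Rep.trivial (ZMod 2) W4 (ZMod 2))
    W4.classReps W4.classReps_mem_cocycles₂
    W4.detectors W4.detectors_eq_zero_of_mem_coboundaries₂ W4.detectors_classReps
  have hrank : (5 : Cardinal) ≤ Module.rank (ZMod 2)
      (groupCohomology (Rep.trivial (ZMod 2) W4 (ZMod 2)) 2) := by
    simpa using hli.cardinal_le_rank
  refine ⟨hrank, ⟨fun e => ?_⟩⟩
  rw [e.rank_eq, rank_prod', Module.rank_self] at hrank
  norm_num at hrank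
end
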